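/- With g_{3,k} = 1_{k=0} + 2(φ(k+2) − 1_{k even} + 2 Σ_{i=1}^{⌊k/2⌋} φ(k+3−2i)) · 1_{k≥1}, one has the asymptotic g_{3,k} ~ 4 (1 + 1_{k even}) k²/π² as k → ∞ along even k and along odd k; precisely, g_{3,2j}/(2j)² → 8/π² and g_{3,2j+1}/(2j+1)² → 4/π² as j → ∞. -/

import Mathlib

/-!
By Möbius inversion `Φ(n) = ∑_{m ≤ n} φ(m) = ∑_d μ(d) T(⌊n/d⌋)` with `T(k) = k(k+1)/2`, and
dominated convergence gives `Φ(n)/n² → (1/2) ∑ μ(d)/d² = 3/π²`. As `φ(2m)` is `φ(m)` or `2φ(m)`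
according to the parity of `m`, the even parity sum satisfies `φ̂_{2n} = Φ(n) + φ̂_{2⌊n/2⌋}`, hence
`φ̂_{2n} = ∑_r Φ(⌊n/2^r⌋)` and `φ̂_{2n}/(2n)² → (1/4)(3/π²)(4/3) = 1/π²`; then
`φ̂_{2n} + φ̂_{2n+1} = Φ(2n+1)` gives `φ̂_{2n+1}/(2n+1)² → 2/π²`. Finally
`g_{3,k} = 4 φ̂_{k+1} + O(k)`.
-/

open Filter Topology Finset ArithmeticFunction
open scoped ArithmeticFunction.Moebius

/-- `g_{3,k} = 1_{k=0} + 2(φ(k+2) − 1_{k even} + 2 ∑_{i=1}^{⌊k/2⌋} φ(k+3−2i)) · 1_{k≥1}`. -/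
def g3 (k : ℕ) : ℤ :=
  if k = 0 then 1
  else 2 * ((Nat.totient (k + 2) : ℤ) - (if k % 2 = 0 then 1 else 0)
      + 2 * ∑ i ∈ Finset.Icc 1 (k / 2), (Nat.totient (k + 3 - 2 * i) : ℤ))

theorem tendsto_natCast_nat_div_div_atTop (d : ℕ) :
    Tendsto (fun n : ℕ => ((n / d : ℕ) : ℝ) / n) atTop (𝓝 (d : ℝ)⁻¹) := by
  refine ((tendsto_nat_floor_mul_div_atTop (inv_nonneg.2 d.cast_nonneg)).comp
    tendsto_natCast_atTop_atTop).congr fun n => ?_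
  simp [inv_mul_eq_div, Nat.floor_div_eq_div]

/-- Terms with `s i = 0` vanish on both sides, as `n / 0 = 0`, `F 0 = 0` and `x / 0 = 0`. -/
theorem tendsto_tsum_mul_div_sq {ι : Type*} (c : ι → ℝ) (s : ι → ℕ) {F : ℕ → ℝ} {L C : ℝ}
    (hF : Tendsto (fun k : ℕ => F k / k ^ 2) atTop (𝓝 L)) (hFC : ∀ k, |F k| ≤ C * k ^ 2)
    (hc : Summable fun i => |c i| / (s i : ℝ) ^ 2) :
    Tendsto (fun n : ℕ => ∑' i, c i * F (n / s i) / n ^ 2) atTop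
      (𝓝 (L * ∑' i, c i / (s i : ℝ) ^ 2)) := by
  have hF0 : F 0 = 0 := by simpa using hFC 0
  have hC : 0 ≤ C := by simpa using (abs_nonneg _).trans (hFC 1)
  rw [← tsum_mul_left]
  refine tendsto_tsum_of_dominated_convergence (hc.mul_left C) (fun i => ?_) ?_
  · rcases eq_or_ne (s i) 0 with hs | hs
    · simp [hs, hF0]
    have hquot := hF.comp (Nat.tendsto_div_const_atTop hs)
    have hlim := (hquot.mul ((tendsto_natCast_nat_div_div_atTop (s i)).pow 2)).const_mul (c i)
    convert hlim.congr' ?_ using 2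
    · field_simp
    filter_upwards [eventually_ge_atTop (s i)] with n hn
    have : ((n / s i : ℕ) : ℝ) ≠ 0 := by
      exact_mod_cast (Nat.div_pos hn (Nat.pos_of_ne_zero hs)).ne'
    have : (n : ℝ) ≠ 0 := by exact_mod_cast (Nat.pos_of_ne_zero hs).trans_le hn |>.ne'
    simp only [Function.comp_apply]
    field_simp
  · filter_upwards [eventually_gt_atTop 0] with n hn i
    have hn' : (0 : ℝ) < n := by exact_mod_cast hn
    rw [Real.norm_eq_abs, abs_div, abs_mul, abs_of_pos (pow_pos hn' 2)]
    rcases eq_or_ne (s i) 0 with hs | hs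
    · simp [hs, hF0]
    have hs' : (0 : ℝ) < s i := by exact_mod_cast Nat.pos_of_ne_zero hs
    have hdiv : ((n / s i : ℕ) : ℝ) * s i ≤ n := by exact_mod_cast Nat.div_mul_le_self n (s i)
    rw [div_le_iff₀ (pow_pos hn' 2), mul_div_assoc', div_mul_eq_mul_div,
      le_div_iff₀ (pow_pos hs' 2)]
    calc |c i| * |F (n / s i)| * (s i : ℝ) ^ 2
        ≤ |c i| * (C * ((n / s i : ℕ) : ℝ) ^ 2) * (s i : ℝ) ^ 2 := by gcongr; exact hFC _
      _ = C * |c i| * (((n / s i : ℕ) : ℝ) * s i) ^ 2 := by ring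
      _ ≤ C * |c i| * (n : ℝ) ^ 2 := by gcongr

theorem tsum_moebius_div_sq : ∑' d : ℕ, (μ d : ℝ) / (d : ℝ) ^ 2 = 6 / Real.pi ^ 2 := by
  have h2 : 1 < (2 : ℂ).re := by norm_num
  have hL := LSeries_zeta_mul_Lseries_moebius h2
  rw [LSeries_zeta_eq_riemannZeta h2, riemannZeta_two] at hL
  have hterm : LSeries (fun n => (μ n : ℂ)) 2 = ((∑' d : ℕ, (μ d : ℝ) / (d : ℝ) ^ 2 : ℝ) : ℂ) := by
    rw [LSeries, Complex.ofReal_tsum]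
    congr 1 with n
    rcases eq_or_ne n 0 with rfl | hn
    · simp
    · rw [LSeries.term_of_ne_zero hn, ← Nat.cast_ofNat, Complex.cpow_natCast]
      push_cast
      rfl
  rw [hterm] at hL
  have hpi : (Real.pi : ℂ) ^ 2 ≠ 0 := by exact_mod_cast (pow_pos Real.pi_pos 2).ne'
  apply Complex.ofReal_injective
  rw [Complex.ofReal_div, Complex.ofReal_pow, Complex.ofReal_ofNat, eq_div_iff hpi]
  linear_combination 6 * hL

theorem summable_abs_moebius_div_sq : Summable fun d : ℕ => |(μ d : ℝ)| / (d : ℝ) ^ 2 :=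
  (Real.summable_one_div_nat_pow.2 one_lt_two).of_nonneg_of_le (fun d => by positivity)
    fun d => by gcongr; exact_mod_cast abs_moebius_le_one

theorem coe_moebius_mul_coe_id_apply (n : ℕ) :
    ((μ : ArithmeticFunction ℝ) * (ArithmeticFunction.id : ArithmeticFunction ℝ)) n =
      n.totient := by
  rcases Nat.eq_zero_or_pos n with rfl | hn
  · simp
  rw [mul_apply, ← (sum_eq_iff_sum_mul_moebius_eq (f := fun m => (m.totient : ℝ))
    (g := fun m => (m : ℝ))).1 (fun m _ => ?_) n hn]
  · simp
  · exact_mod_cast Nat.sum_totient m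

theorem sum_Ioc_natCast (k : ℕ) : ∑ m ∈ Ioc 0 k, (m : ℝ) = k * (k + 1) / 2 := by
  induction k with
  | zero => simp
  | succ k ih => rw [sum_Ioc_succ_top k.zero_le, ih]; push_cast; ring

def totientSum (n : ℕ) : ℕ := ∑ m ∈ Ioc 0 n, m.totient

theorem totientSum_eq_tsum_moebius (n : ℕ) :
    (totientSum n : ℝ) = ∑' d : ℕ, μ d * (((n / d : ℕ) : ℝ) * ((n / d : ℕ) + 1) / 2) := by
  rw [tsum_eq_sum (s := Ioc 0 n)]
  · simp_rw [totientSum, Nat.cast_sum, ← coe_moebius_mul_coe_id_apply, sum_Ioc_mul_eq_sum_sum,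
      ← sum_Ioc_natCast]
    simp
  · intro d hd
    rcases Nat.eq_zero_or_pos d with rfl | hd0
    · simp
    · simp [Nat.div_eq_of_lt (by simpa [hd0] using hd)]

theorem totientSum_le_sq (n : ℕ) : totientSum n ≤ n ^ 2 :=
  (sum_le_card_nsmul _ _ n fun m hm => (Nat.totient_le m).trans (mem_Ioc.1 hm).2).trans
    (by simp [sq])

theorem totientSum_succ (n : ℕ) : totientSum (n + 1) = totientSum n + (n + 1).totient :=
  sum_Ioc_succ_top n.zero_le _

theorem tendsto_totientSum_div_sq :
    Tendsto (fun n : ℕ => (totientSum n : ℝ) / n ^ 2) atTop (𝓝 (3 / Real.pi ^ 2)) := by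
  have hT : Tendsto (fun k : ℕ => (k : ℝ) * (k + 1) / 2 / k ^ 2) atTop (𝓝 (1 / 2)) := by
    have := (tendsto_one_div_atTop_nhds_zero_nat (𝕜 := ℝ)).const_add 1 |>.div_const 2
    rw [add_zero] at this
    refine this.congr' ?_
    filter_upwards [eventually_ne_atTop 0] with k hk
    field_simp
  have hTC (k : ℕ) : |(k : ℝ) * (k + 1) / 2| ≤ 1 * (k : ℝ) ^ 2 := by
    rw [abs_of_nonneg (by positivity)]
    have : (k : ℝ) ≤ k ^ 2 := by exact_mod_cast Nat.le_self_pow two_ne_zero k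
    linarith
  have := tendsto_tsum_mul_div_sq (fun d => (μ d : ℝ)) id hT hTC summable_abs_moebius_div_sq
  convert this using 2 with n
  · simp [totientSum_eq_tsum_moebius, tsum_div_const]
  · simp only [id, tsum_moebius_div_sq]; ring

/-- The paper's `φ̂_k = φ(k) + φ(k - 2) + φ(k - 4) + ⋯`. -/
def parityTotientSum (k : ℕ) : ℕ := ∑ i ∈ range ((k + 1) / 2), (k - 2 * i).totient

theorem parityTotientSum_add_two (k : ℕ) :
    parityTotientSum (k + 2) = parityTotientSum k + (k + 2).totient := by
  rw [parityTotientSum, show (k + 2 + 1) / 2 = (k + 1) / 2 + 1 by omega, sum_range_succ',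
    parityTotientSum]
  congr 1
  refine sum_congr rfl fun i _ => ?_
  congr 1
  omega

theorem parityTotientSum_add_parityTotientSum_succ (k : ℕ) :
    parityTotientSum k + parityTotientSum (k + 1) = totientSum (k + 1) := by
  induction k with
  | zero => simp [parityTotientSum, totientSum]
  | succ k ih => rw [parityTotientSum_add_two, totientSum_succ, ← ih]; ring

theorem parityTotientSum_two_mul (n : ℕ) :
    parityTotientSum (2 * n) = totientSum n + parityTotientSum (2 * (n / 2)) := by
  have step (m : ℕ) : parityTotientSum (2 * (m + 1)) =
      parityTotientSum (2 * m) + (2 * (m + 1)).totient :=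
    parityTotientSum_add_two (2 * m)
  induction n with
  | zero => simp [parityTotientSum, totientSum]
  | succ n ih =>
    rw [step, ih, totientSum_succ]
    obtain ⟨t, rfl | rfl⟩ := Nat.even_or_odd' n
    · rw [Nat.totient_two_mul_of_odd (odd_two_mul_add_one t),
        show (2 * t + 1) / 2 = 2 * t / 2 by omega]
      ring
    · rw [show (2 * t + 1 + 1) / 2 = t + 1 by omega, show (2 * t + 1) / 2 = t by omega, step,
        Nat.totient_two_mul_of_even ⟨t + 1, by ring⟩, show 2 * t + 1 + 1 = 2 * (t + 1) by ring]
      ring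

theorem parityTotientSum_two_mul_eq_tsum (n : ℕ) :
    (parityTotientSum (2 * n) : ℝ) = ∑' r : ℕ, (totientSum (n / 2 ^ r) : ℝ) := by
  induction n using Nat.strong_induction_on with
  | _ n ih =>
  rcases Nat.eq_zero_or_pos n with rfl | hn
  · simp [parityTotientSum, totientSum]
  have hsupp : ∀ r ∉ range n, (totientSum (n / 2 ^ r) : ℝ) = 0 := fun r hr => by
    rw [Nat.div_eq_of_lt ((Nat.lt_two_pow_self).trans_le
      (Nat.pow_le_pow_right two_pos (by simpa using hr)))]
    simp [totientSum]
  rw [(summable_of_ne_finset_zero hsupp).tsum_eq_zero_add, parityTotientSum_two_mul,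
    Nat.cast_add, ih _ (Nat.div_lt_self hn one_lt_two)]
  simp [pow_succ', Nat.div_div_eq_div_mul]

theorem tendsto_parityTotientSum_two_mul_div_sq :
    Tendsto (fun n : ℕ => (parityTotientSum (2 * n) : ℝ) / ((2 * n : ℕ) : ℝ) ^ 2) atTop
      (𝓝 (1 / Real.pi ^ 2)) := by
  have hterm (r : ℕ) : (1 : ℝ) / ((2 ^ r : ℕ) : ℝ) ^ 2 = (1 / 4) ^ r := by
    rw [Nat.cast_pow, ← pow_mul, mul_comm, pow_mul, one_div_pow]
    norm_num
  have hsum : Summable fun r : ℕ => |(1 : ℝ)| / ((2 ^ r : ℕ) : ℝ) ^ 2 := by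
    simpa only [abs_one, hterm] using summable_geometric_of_lt_one (by norm_num) (by norm_num)
  have hΦ (k : ℕ) : |(totientSum k : ℝ)| ≤ 1 * (k : ℝ) ^ 2 := by
    rw [abs_of_nonneg (Nat.cast_nonneg _), one_mul]
    exact_mod_cast totientSum_le_sq k
  have key := (tendsto_tsum_mul_div_sq (fun _ => (1 : ℝ)) (fun r => 2 ^ r)
    tendsto_totientSum_div_sq hΦ hsum).const_mul (1 / 4)
  convert key using 2 with n
  · rw [parityTotientSum_two_mul_eq_tsum, ← tsum_div_const, ← tsum_mul_left]
    congr 1 with r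
    push_cast
    ring
  · rw [tsum_congr hterm, tsum_geometric_of_lt_one (by norm_num) (by norm_num)]
    ring

theorem tendsto_parityTotientSum_two_mul_add_one_div_sq :
    Tendsto (fun n : ℕ => (parityTotientSum (2 * n + 1) : ℝ) / ((2 * n + 1 : ℕ) : ℝ) ^ 2) atTop
      (𝓝 (2 / Real.pi ^ 2)) := by
  have hodd : Tendsto (fun n : ℕ => 2 * n + 1) atTop atTop :=
    tendsto_atTop_mono (fun n => show n ≤ 2 * n + 1 by omega) tendsto_id
  have hratio : Tendsto (fun n : ℕ => ((2 * n : ℕ) : ℝ) / ((2 * n + 1 : ℕ) : ℝ)) atTop (𝓝 1) := by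
    refine ((tendsto_natCast_div_add_atTop (1 : ℝ)).comp
      (tendsto_atTop_mono (fun n => show n ≤ 2 * n by omega) tendsto_id)).congr
      fun n => ?_
    simp
  have key := (tendsto_totientSum_div_sq.comp hodd).sub
    (tendsto_parityTotientSum_two_mul_div_sq.mul (hratio.pow 2))
  convert key.congr' ?_ using 2
  · ring
  filter_upwards [eventually_ne_atTop 0] with n hn
  have hsplit : (parityTotientSum (2 * n + 1) : ℝ) =
      totientSum (2 * n + 1) - parityTotientSum (2 * n) := by
    rw [← parityTotientSum_add_parityTotientSum_succ]
    push_cast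
    ring
  have : ((2 * n : ℕ) : ℝ) ≠ 0 := by positivity
  simp only [Function.comp_apply, hsplit]
  field_simp

theorem sum_Icc_totient_add_one (k : ℕ) :
    ∑ i ∈ Icc 1 (k / 2), (k + 3 - 2 * i).totient + 1 = parityTotientSum (k + 1) := by
  rw [parityTotientSum, show (k + 1 + 1) / 2 = k / 2 + 1 by omega, sum_range_succ,
    Nat.totient_eq_one_iff.2 (by omega), ← Ico_add_one_right_eq_Icc, sum_Ico_eq_sum_range,
    Nat.add_sub_cancel]
  congr 1
  refine sum_congr rfl fun i _ => ?_
  congr 1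
  omega

theorem g3_eq_of_ne_zero {k : ℕ} (hk : k ≠ 0) :
    g3 k = 4 * parityTotientSum (k + 1) + 2 * (k + 2).totient
      - 2 * (if k % 2 = 0 then 1 else 0) - 4 := by
  rw [g3, if_neg hk, ← sum_Icc_totient_add_one]
  push_cast
  ring

theorem g3_sub_isBigO :
    (fun k : ℕ => (g3 k : ℝ) - 4 * parityTotientSum (k + 1)) =O[atTop] fun k : ℕ => (k : ℝ) := by
  refine Asymptotics.IsBigO.of_bound 12 ?_
  filter_upwards [eventually_ge_atTop 1] with k hk
  have hφ : ((k + 2).totient : ℝ) ≤ k + 2 := by exact_mod_cast Nat.totient_le _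
  have hk' : (1 : ℝ) ≤ k := by exact_mod_cast hk
  rw [g3_eq_of_ne_zero (by omega), Real.norm_eq_abs, Real.norm_eq_abs, Nat.abs_cast, abs_le]
  push_cast
  split_ifs <;> constructor <;> linarith [((k + 2).totient.cast_nonneg : (0 : ℝ) ≤ _)]

theorem tendsto_g3_div_sq_of_tendsto {α : Type*} {l : Filter α} {s : α → ℕ}
    (hs : Tendsto s l atTop) {L : ℝ}
    (h : Tendsto (fun a => (parityTotientSum (s a + 1) : ℝ) / ((s a + 1 : ℕ) : ℝ) ^ 2) l (𝓝 L)) :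
    Tendsto (fun a => (g3 (s a) : ℝ) / ((s a : ℕ) : ℝ) ^ 2) l (𝓝 (4 * L)) := by
  have hlo : (fun k : ℕ => (k : ℝ)) =o[atTop] fun k : ℕ => (k : ℝ) ^ 2 := by
    simpa only [Function.comp_def, pow_one] using
      (Asymptotics.isLittleO_pow_pow_atTop_of_lt (𝕜 := ℝ) one_lt_two).comp_tendsto
        tendsto_natCast_atTop_atTop
  have herr := (g3_sub_isBigO.trans_isLittleO hlo).tendsto_div_nhds_zero
  have hratio : Tendsto (fun k : ℕ => (k : ℝ) / ((k + 1 : ℕ) : ℝ)) atTop (𝓝 1) := by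
    simpa using tendsto_natCast_div_add_atTop (1 : ℝ)
  have key := (herr.comp hs).add ((h.const_mul 4).div ((hratio.comp hs).pow 2) (by norm_num))
  convert key.congr' ?_ using 2
  · ring
  filter_upwards [hs.eventually_ne_atTop 0] with a ha
  have : (s a : ℝ) ≠ 0 := by exact_mod_cast ha
  simp only [Function.comp_apply, Pi.div_apply]
  field_simp
  ring

/-- `g_{3,k} ~ 4(1 + 1_{k even}) k²/π²` along even and odd `k`:
`g_{3,2j}/(2j)² → 8/π²` and `g_{3,2j+1}/(2j+1)² → 4/π²`. -/
theorem g3_asymptotics :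
    Tendsto (fun j : ℕ => (g3 (2 * j) : ℝ) / ((2 * j : ℕ) : ℝ) ^ 2) atTop
      (nhds (8 / Real.pi ^ 2)) ∧
    Tendsto (fun j : ℕ => (g3 (2 * j + 1) : ℝ) / ((2 * j + 1 : ℕ) : ℝ) ^ 2) atTop
      (nhds (4 / Real.pi ^ 2)) := by
  constructor
  · convert tendsto_g3_div_sq_of_tendsto (s := (2 * ·))
      (tendsto_atTop_mono (fun n => show n ≤ 2 * n by omega) tendsto_id)
      tendsto_parityTotientSum_two_mul_add_one_div_sq using 2
    ring
  · have heven := tendsto_parityTotientSum_two_mul_div_sq.comp (tendsto_add_atTop_nat 1)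
    convert tendsto_g3_div_sq_of_tendsto (s := (2 * · + 1))
      (tendsto_atTop_mono (fun n => show n ≤ 2 * n + 1 by omega) tendsto_id) heven using 2
    ring
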